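/- arXiv:1710.02780 — 2 statements merged into one kernel-verified Lean document; each statement's English description precedes it below -/
import Mathlib

section
/- Let k > 0, let R₀ : [0,∞) → ℝ^{3×3} and Ω₀ : [0,∞) → ℝ³ be differentiable with R₀(t)ᵀR₀(t) = I and R₀′(t) = R₀(t) Ω̂₀(t) for all t, and let ΔR : [0,∞) → ℝ^{3×3} and ΔΩ : [0,∞) → ℝ³ be differentiable functions satisfying the linearized equations ΔR′ = ΔR Ω̂₀ + R₀ (ΔΩ)^∧ − 2k R₀ Sym(R₀ᵀ ΔR) for all t ≥ 0. Define Z(t) = R₀(t)ᵀ ΔR(t), Z_s = Sym(Z), and Z_k = Skew(Z). Then for all t ≥ 0: Z_s′ = [Z_s, Ω̂₀] − 2k Z_s and Z_k′ = [Z_k, Ω̂₀] + (ΔΩ)^∧. -/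
open Matrix

noncomputable section

attribute [local instance] Matrix.frobeniusNormedAddCommGroup Matrix.frobeniusNormedSpace

/-- The hat map `∧ : ℝ³ → ℝ^{3×3}`. -/
def hat (Ω : Fin 3 → ℝ) : Matrix (Fin 3) (Fin 3) ℝ :=
  !![0, -Ω 2, Ω 1; Ω 2, 0, -Ω 0; -Ω 1, Ω 0, 0]

/-- The symmetrization operator `Sym(A) = (A + Aᵀ)/2`. -/
def symPart {n : ℕ} (A : Matrix (Fin n) (Fin n) ℝ) : Matrix (Fin n) (Fin n) ℝ :=
  (1 / 2 : ℝ) • (A + Aᵀ)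

/-- The skew-symmetrization operator `Skew(A) = (A − Aᵀ)/2`. -/
def skewPart {n : ℕ} (A : Matrix (Fin n) (Fin n) ℝ) : Matrix (Fin n) (Fin n) ℝ :=
  (1 / 2 : ℝ) • (A - Aᵀ)

/-! Since `R₀ᵀ' = -Ω̂₀ R₀ᵀ` and `R₀ᵀ R₀ = 1`, the product `Z = R₀ᵀ ΔR` satisfies
`Z' = [Z, Ω̂₀] + (ΔΩ)^ − 2k Sym Z`. Both `Sym` and `Skew` are linear, commute with `d/dt`, and commute
with `[·, W]` for skew-symmetric `W`; `Sym` kills the skew matrix `(ΔΩ)^` and `Skew` kills `Sym Z`. -/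

attribute [local instance] Matrix.frobeniusNormedRing Matrix.frobeniusNormedAlgebra

theorem hat_transpose (Ω : Fin 3 → ℝ) : (hat Ω)ᵀ = -hat Ω := by
  ext i j
  fin_cases i <;> fin_cases j <;> simp [hat]

section SymSkew

variable {n : ℕ} (A B : Matrix (Fin n) (Fin n) ℝ)

theorem symPart_add : symPart (A + B) = symPart A + symPart B := by
  simp only [symPart, transpose_add]; module

theorem symPart_sub : symPart (A - B) = symPart A - symPart B := by
  simp only [symPart, transpose_sub]; module

theorem symPart_smul (c : ℝ) : symPart (c • A) = c • symPart A := by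
  simp only [symPart, transpose_smul]; module

theorem skewPart_add : skewPart (A + B) = skewPart A + skewPart B := by
  simp only [skewPart, transpose_add]; module

theorem skewPart_sub : skewPart (A - B) = skewPart A - skewPart B := by
  simp only [skewPart, transpose_sub]; module

theorem skewPart_smul (c : ℝ) : skewPart (c • A) = c • skewPart A := by
  simp only [skewPart, transpose_smul]; module

theorem symPart_symPart : symPart (symPart A) = symPart A := by
  simp only [symPart, transpose_smul, transpose_add, transpose_transpose]; module

theorem skewPart_symPart : skewPart (symPart A) = 0 := by
  simp only [skewPart, symPart, transpose_smul, transpose_add, transpose_transpose]; module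

variable {A} {W : Matrix (Fin n) (Fin n) ℝ} (hW : Wᵀ = -W)
include hW

theorem symPart_of_transpose_eq_neg : symPart W = 0 := by
  simp only [symPart, hW]; module

theorem skewPart_of_transpose_eq_neg : skewPart W = W := by
  simp only [skewPart, hW]; module

theorem symPart_mul_sub_mul : symPart (A * W - W * A) = symPart A * W - W * symPart A := by
  simp only [symPart, transpose_sub, transpose_mul, hW, add_mul, mul_add,
    smul_mul_assoc, mul_smul_comm, mul_neg, neg_mul]
  module

theorem skewPart_mul_sub_mul : skewPart (A * W - W * A) = skewPart A * W - W * skewPart A := by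
  simp only [skewPart, transpose_sub, transpose_mul, hW, sub_mul, mul_sub,
    smul_mul_assoc, mul_smul_comm, mul_neg, neg_mul]
  module

end SymSkew

section Derivatives

variable {s : Set ℝ} {t : ℝ}

theorem HasDerivWithinAt.matrix_transpose {m n : Type*} [Fintype m] [Fintype n]
    {f : ℝ → Matrix m n ℝ} {f' : Matrix m n ℝ}
    (hf : HasDerivWithinAt f f' s t) : HasDerivWithinAt (fun x => (f x)ᵀ) f'ᵀ s t :=
  (LinearMap.toContinuousLinearMap
    (transposeLinearEquiv m n ℝ ℝ).toLinearMap).hasFDerivAt.comp_hasDerivWithinAt t hf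

theorem HasDerivWithinAt.matrix_mul {n : Type*} [Fintype n] [DecidableEq n]
    {f g : ℝ → Matrix n n ℝ} {f' g' : Matrix n n ℝ}
    (hf : HasDerivWithinAt f f' s t) (hg : HasDerivWithinAt g g' s t) :
    HasDerivWithinAt (fun x => f x * g x) (f' * g t + f t * g') s t :=
  hf.mul hg

variable {n : ℕ} {f : ℝ → Matrix (Fin n) (Fin n) ℝ} {f' : Matrix (Fin n) (Fin n) ℝ}

theorem HasDerivWithinAt.symPart (hf : HasDerivWithinAt f f' s t) :
    HasDerivWithinAt (fun x => symPart (f x)) (symPart f') s t := by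
  unfold _root_.symPart
  exact (hf.add hf.matrix_transpose).const_smul (1 / 2 : ℝ)

theorem HasDerivWithinAt.skewPart (hf : HasDerivWithinAt f f' s t) :
    HasDerivWithinAt (fun x => skewPart (f x)) (skewPart f') s t := by
  unfold _root_.skewPart
  exact (hf.sub hf.matrix_transpose).const_smul (1 / 2 : ℝ)

theorem hasDerivWithinAt_transpose_mul_of_rotation {R ΔR : ℝ → Matrix (Fin n) (Fin n) ℝ}
    {W D S : Matrix (Fin n) (Fin n) ℝ} {c : ℝ} (horth : (R t)ᵀ * R t = 1) (hW : Wᵀ = -W)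
    (hR : HasDerivWithinAt R (R t * W) s t)
    (hΔR : HasDerivWithinAt ΔR (ΔR t * W + R t * D - c • (R t * S)) s t) :
    HasDerivWithinAt (fun x => (R x)ᵀ * ΔR x)
      ((R t)ᵀ * ΔR t * W - W * ((R t)ᵀ * ΔR t) + D - c • S) s t := by
  convert hR.matrix_transpose.matrix_mul hΔR using 1
  simp only [transpose_mul, hW, mul_add, mul_sub, mul_smul_comm, ← mul_assoc, horth, one_mul]
  noncomm_ring

end Derivatives

theorem stmt12_general (k : ℝ)
    (R₀ ΔR : ℝ → Matrix (Fin 3) (Fin 3) ℝ) (Ω₀ ΔΩ : ℝ → Fin 3 → ℝ)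
    (horth : ∀ t ∈ Set.Ici (0 : ℝ), (R₀ t)ᵀ * R₀ t = 1)
    (hR₀ : ∀ t ∈ Set.Ici (0 : ℝ),
      HasDerivWithinAt R₀ (R₀ t * hat (Ω₀ t)) (Set.Ici (0 : ℝ)) t)
    (hΔR : ∀ t ∈ Set.Ici (0 : ℝ),
      HasDerivWithinAt ΔR
        (ΔR t * hat (Ω₀ t) + R₀ t * hat (ΔΩ t) -
          (2 * k) • (R₀ t * symPart ((R₀ t)ᵀ * ΔR t)))
        (Set.Ici (0 : ℝ)) t) :
    ∀ t ∈ Set.Ici (0 : ℝ),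
      HasDerivWithinAt (fun s => symPart ((R₀ s)ᵀ * ΔR s))
        (symPart ((R₀ t)ᵀ * ΔR t) * hat (Ω₀ t) - hat (Ω₀ t) * symPart ((R₀ t)ᵀ * ΔR t) -
          (2 * k) • symPart ((R₀ t)ᵀ * ΔR t))
        (Set.Ici (0 : ℝ)) t ∧
      HasDerivWithinAt (fun s => skewPart ((R₀ s)ᵀ * ΔR s))
        (skewPart ((R₀ t)ᵀ * ΔR t) * hat (Ω₀ t) - hat (Ω₀ t) * skewPart ((R₀ t)ᵀ * ΔR t) +
          hat (ΔΩ t))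
        (Set.Ici (0 : ℝ)) t := by
  intro t ht
  have hW := hat_transpose (Ω₀ t)
  have hD := hat_transpose (ΔΩ t)
  have hZ := hasDerivWithinAt_transpose_mul_of_rotation (horth t ht) hW (hR₀ t ht) (hΔR t ht)
  constructor
  · convert hZ.symPart using 1
    rw [symPart_sub, symPart_add, symPart_mul_sub_mul hW, symPart_of_transpose_eq_neg hD,
      symPart_smul, symPart_symPart, add_zero]
  · convert hZ.skewPart using 1
    rw [skewPart_sub, skewPart_add, skewPart_mul_sub_mul hW, skewPart_of_transpose_eq_neg hD,
      skewPart_smul, skewPart_symPart, smul_zero, sub_zero]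

theorem stmt12 (k : ℝ) (hk : 0 < k)
    (R₀ ΔR : ℝ → Matrix (Fin 3) (Fin 3) ℝ) (Ω₀ ΔΩ : ℝ → Fin 3 → ℝ)
    (horth : ∀ t ∈ Set.Ici (0 : ℝ), (R₀ t)ᵀ * R₀ t = 1)
    (hR₀ : ∀ t ∈ Set.Ici (0 : ℝ),
      HasDerivWithinAt R₀ (R₀ t * hat (Ω₀ t)) (Set.Ici (0 : ℝ)) t)
    (hΔΩ : ∀ t ∈ Set.Ici (0 : ℝ), DifferentiableWithinAt ℝ ΔΩ (Set.Ici (0 : ℝ)) t)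
    (hΔR : ∀ t ∈ Set.Ici (0 : ℝ),
      HasDerivWithinAt ΔR
        (ΔR t * hat (Ω₀ t) + R₀ t * hat (ΔΩ t) -
          (2 * k) • (R₀ t * symPart ((R₀ t)ᵀ * ΔR t)))
        (Set.Ici (0 : ℝ)) t) :
    ∀ t ∈ Set.Ici (0 : ℝ),
      HasDerivWithinAt (fun s => symPart ((R₀ s)ᵀ * ΔR s))
        (symPart ((R₀ t)ᵀ * ΔR t) * hat (Ω₀ t) - hat (Ω₀ t) * symPart ((R₀ t)ᵀ * ΔR t) -
          (2 * k) • symPart ((R₀ t)ᵀ * ΔR t))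
        (Set.Ici (0 : ℝ)) t ∧
      HasDerivWithinAt (fun s => skewPart ((R₀ s)ᵀ * ΔR s))
        (skewPart ((R₀ t)ᵀ * ΔR t) * hat (Ω₀ t) - hat (Ω₀ t) * skewPart ((R₀ t)ᵀ * ΔR t) +
          hat (ΔΩ t))
        (Set.Ici (0 : ℝ)) t :=
  stmt12_general k R₀ ΔR Ω₀ ΔΩ horth hR₀ hΔR
end
end

section
/- Let k > 0, let A : [0,∞) → ℝ^{3×3} be a continuous matrix-valued function, and let Z_s : [0,∞) → ℝ^{3×3} be a differentiable function such that Z_s(t) is symmetric for all t ≥ 0 and Z_s′(t) = [Z_s(t), A(t)] − 2k Z_s(t) for all t ≥ 0. Then ‖Z_s(t)‖ ≤ e^{−2kt} ‖Z_s(0)‖ for all t ≥ 0, where ‖·‖ is the Frobenius norm. -/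
/-! The squared norm `g t = ‖Z t‖²` satisfies `g' = 2 ⟨Z, [Z, A] - 2k Z⟩ = -4k g`, because
`⟨Z, [Z, A]⟩ = tr(Z Z A - Z A Z) = 0` for symmetric `Z`. Hence `g t = e^{-4kt} g 0`, and taking
square roots gives `‖Z t‖ = e^{-2kt} ‖Z 0‖`. -/

open Matrix

noncomputable section

attribute [local instance] Matrix.frobeniusNormedAddCommGroup Matrix.frobeniusNormedSpace

/-- The Frobenius inner product `⟨A,B⟩ = tr(AᵀB)`. -/
def finner {n : ℕ} (A B : Matrix (Fin n) (Fin n) ℝ) : ℝ := (Aᵀ * B).trace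

/-- The Frobenius norm induced by `finner`. -/
def fnorm {n : ℕ} (A : Matrix (Fin n) (Fin n) ℝ) : ℝ := Real.sqrt (finner A A)

section Frobenius

variable {n : ℕ}

lemma isBilinearMap_finner : IsBilinearMap ℝ (finner (n := n)) where
  add_left _ _ _ := by simp [finner, Matrix.add_mul]
  smul_left _ _ _ := by simp [finner]
  add_right _ _ _ := by simp [finner, Matrix.mul_add]
  smul_right _ _ _ := by simp [finner]

lemma finner_comm (M N : Matrix (Fin n) (Fin n) ℝ) : finner M N = finner N M := by
  rw [finner, finner, ← trace_transpose, transpose_mul, transpose_transpose]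

lemma finner_commutator_eq_zero {Z : Matrix (Fin n) (Fin n) ℝ} (hZ : Z.IsSymm)
    (B : Matrix (Fin n) (Fin n) ℝ) : finner Z (Z * B - B * Z) = 0 := by
  rw [finner, hZ.eq, Matrix.mul_sub, trace_sub, ← Matrix.mul_assoc, trace_mul_comm (Z * Z),
    trace_mul_comm Z (B * Z), Matrix.mul_assoc, sub_self]

lemma finner_commutator_sub_smul {Z : Matrix (Fin n) (Fin n) ℝ} (hZ : Z.IsSymm)
    (B : Matrix (Fin n) (Fin n) ℝ) (c : ℝ) :
    finner Z (Z * B - B * Z - c • Z) = -c * finner Z Z := by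
  have := finner_commutator_eq_zero hZ B
  simp only [finner, Matrix.mul_sub, trace_sub, Matrix.mul_smul, trace_smul, smul_eq_mul] at this ⊢
  linarith

theorem HasDerivWithinAt.finner {f g : ℝ → Matrix (Fin n) (Fin n) ℝ}
    {f' g' : Matrix (Fin n) (Fin n) ℝ} {s : Set ℝ} {x : ℝ}
    (hf : HasDerivWithinAt f f' s x) (hg : HasDerivWithinAt g g' s x) :
    HasDerivWithinAt (fun t => _root_.finner (f t) (g t))
      (_root_.finner (f x) g' + _root_.finner f' (g x)) s x :=
  isBilinearMap_finner.toContinuousBilinearMap.hasDerivWithinAt_of_bilinear hf hg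

end Frobenius

theorem eq_exp_mul_of_hasDerivWithinAt_Ici {g : ℝ → ℝ} {a c : ℝ}
    (hg : ∀ t ∈ Set.Ici a, HasDerivWithinAt g (c * g t) (Set.Ici a) t) :
    ∀ t ∈ Set.Ici a, g t = Real.exp (c * (t - a)) * g a := by
  intro t ht
  set h : ℝ → ℝ := fun s => Real.exp (-c * (s - a)) * g s
  have hderiv : ∀ s ∈ Set.Ici a, HasDerivWithinAt h 0 (Set.Ici a) s := by
    intro s hs
    have hexp : HasDerivAt (fun s => Real.exp (-c * (s - a))) (Real.exp (-c * (s - a)) * -c) s :=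
      (((hasDerivAt_id' s).sub_const a).const_mul (-c)).exp.congr_deriv (by ring)
    exact (hexp.hasDerivWithinAt.mul (hg s hs)).congr_deriv (by ring)
  have hconst := constant_of_has_deriv_right_zero (f := h) (a := a) (b := t)
    (fun s hs => (hderiv s hs.1).continuousWithinAt.mono Set.Icc_subset_Ici_self)
    (fun s hs => (hderiv s hs.1).mono (Set.Ici_subset_Ici.mpr hs.1)) t ⟨ht, le_rfl⟩
  simp only [h, sub_self, mul_zero, Real.exp_zero, one_mul] at hconst
  rw [← hconst, ← mul_assoc, ← Real.exp_add, show c * (t - a) + -c * (t - a) = 0 by ring,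
    Real.exp_zero, one_mul]

theorem stmt13_general (k : ℝ)
    (A : ℝ → Matrix (Fin 3) (Fin 3) ℝ)
    (Zs : ℝ → Matrix (Fin 3) (Fin 3) ℝ)
    (hsym : ∀ t ∈ Set.Ici (0 : ℝ), (Zs t)ᵀ = Zs t)
    (hZs : ∀ t ∈ Set.Ici (0 : ℝ),
      HasDerivWithinAt Zs (Zs t * A t - A t * Zs t - (2 * k) • Zs t)
        (Set.Ici (0 : ℝ)) t) :
    ∀ t ∈ Set.Ici (0 : ℝ), fnorm (Zs t) ≤ Real.exp (-(2 * k) * t) * fnorm (Zs 0) := by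
  have hsq_deriv : ∀ t ∈ Set.Ici (0 : ℝ), HasDerivWithinAt (fun s => finner (Zs s) (Zs s))
      (-(4 * k) * finner (Zs t) (Zs t)) (Set.Ici 0) t := by
    intro t ht
    convert (hZs t ht).finner (hZs t ht) using 1
    rw [finner_comm (_ - _ - _), finner_commutator_sub_smul (hsym t ht)]
    ring
  intro t ht
  have hsq := eq_exp_mul_of_hasDerivWithinAt_Ici hsq_deriv t ht
  rw [sub_zero, show -(4 * k) * t = 2 * (-(2 * k) * t) by ring] at hsq
  refine le_of_eq ?_
  rw [fnorm, fnorm, hsq, Real.sqrt_mul (Real.exp_pos _).le, ← Real.exp_half,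
    mul_div_cancel_left₀ _ two_ne_zero]

theorem stmt13 (k : ℝ) (hk : 0 < k)
    (A : ℝ → Matrix (Fin 3) (Fin 3) ℝ) (hA : ContinuousOn A (Set.Ici (0 : ℝ)))
    (Zs : ℝ → Matrix (Fin 3) (Fin 3) ℝ)
    (hsym : ∀ t ∈ Set.Ici (0 : ℝ), (Zs t)ᵀ = Zs t)
    (hZs : ∀ t ∈ Set.Ici (0 : ℝ),
      HasDerivWithinAt Zs (Zs t * A t - A t * Zs t - (2 * k) • Zs t)
        (Set.Ici (0 : ℝ)) t) :
    ∀ t ∈ Set.Ici (0 : ℝ), fnorm (Zs t) ≤ Real.exp (-(2 * k) * t) * fnorm (Zs 0) :=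
  stmt13_general k A Zs hsym hZs
end
end
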